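/- arXiv:2006.03727 — 2 statements merged into one kernel-verified Lean document; each statement's English description precedes it below -/
import Mathlib

section
/- Let Q₀ be a nonempty open bounded subset of ℝ^d \ {0}, A a d×d real expansive matrix, a, τ, σ, C, L, N > 0, and let ĝ : ℝ^d → ℂ be measurable with |ĝ(ξ)| ≤ C·min{1, |ξ|^L}·(1+|ξ|)^{−N} for all ξ ∈ ℝ^d. Then for all m, n ∈ ℤ with n − m ≥ 0: M_{mn} ≤ a^{τ(m−n)} · (1 + b·λ₊^{n−m})^σ · [ C · min{1, (b·λ₊^{n−m}·R)^L} / (1 + λ₋^{n−m}·r/b)^N ]^τ. -/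
/-! Substituting `ξ = Aⁿ η` with `η ∈ Q₀` turns the integrand of `M_{mn}` into `|ĝ(A^{n-m} η)|`,
and the comparison constant `b` places `|A^{n-m} η|` in `[λ₋^{n-m} r / b, b λ₊^{n-m} R]`. The decay
of `ĝ` then bounds the integrand, hence its average over `Q_n`, by the bracketed constant, while
`‖A^{n-m}‖ ≤ b λ₊^{n-m}`; the remaining factors are monotone. -/

open MeasureTheory

noncomputable section

/-- A real square matrix is *expansive* if every complex eigenvalue has modulus `> 1`. -/
def IsExpansive {d : ℕ} (A : Matrix (Fin d) (Fin d) ℝ) : Prop :=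
  ∀ μ ∈ spectrum ℂ (A.map (Complex.ofReal)), 1 < ‖μ‖

/-- Image of a set under the linear map on Euclidean space induced by a matrix. -/
def matImage {d : ℕ} (M : Matrix (Fin d) (Fin d) ℝ) (S : Set (EuclideanSpace ℝ (Fin d))) :
    Set (EuclideanSpace ℝ (Fin d)) :=
  (Matrix.toEuclideanLin M) '' S

/-- Operator norm of a matrix acting on Euclidean space. -/
def opNorm {d : ℕ} (M : Matrix (Fin d) (Fin d) ℝ) : ℝ :=
  ‖Matrix.toEuclideanCLM (𝕜 := ℝ) M‖

/-- `1 < λ₋ < min |σ(A)| ≤ max |σ(A)| < λ₊`. -/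
def SpecBound {d : ℕ} (A : Matrix (Fin d) (Fin d) ℝ) (lm lp : ℝ) : Prop :=
  1 < lm ∧ ∀ μ ∈ spectrum ℂ (A.map (Complex.ofReal)),
    lm < ‖μ‖ ∧ ‖μ‖ < lp

/-- `b` is a comparison constant for the powers of `A`:
`(1/b)·λ₋^j·|ξ| ≤ |A^j ξ| ≤ b·λ₊^j·|ξ|` and `(1/b)·λ₊^{-j}·|ξ| ≤ |A^{-j} ξ| ≤ b·λ₋^{-j}·|ξ|`. -/
def ExpBound {d : ℕ} (A : Matrix (Fin d) (Fin d) ℝ) (lm lp b : ℝ) : Prop :=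
  ∀ (ξ : EuclideanSpace ℝ (Fin d)) (j : ℕ),
    (1 / b) * lm ^ j * ‖ξ‖ ≤ ‖Matrix.toEuclideanLin (A ^ (j : ℤ)) ξ‖ ∧
    ‖Matrix.toEuclideanLin (A ^ (j : ℤ)) ξ‖ ≤ b * lp ^ j * ‖ξ‖ ∧
    (1 / b) * lp ^ (-(j : ℤ)) * ‖ξ‖ ≤ ‖Matrix.toEuclideanLin (A ^ (-(j : ℤ))) ξ‖ ∧
    ‖Matrix.toEuclideanLin (A ^ (-(j : ℤ))) ξ‖ ≤ b * lm ^ (-(j : ℤ)) * ‖ξ‖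

/-- A null or infinite `μ s` makes the left-hand side `0`, since then `(μ s).toReal = 0`. -/
theorem inv_toReal_mul_setIntegral_le_of_norm_le {α : Type*} [MeasurableSpace α]
    {μ : Measure α} {s : Set α} {f : α → ℝ} {K : ℝ} (hs : s.Nonempty)
    (hf : ∀ x ∈ s, ‖f x‖ ≤ K) : (μ s).toReal⁻¹ * ∫ x in s, f x ∂μ ≤ K := by
  have hK : 0 ≤ K := (norm_nonneg _).trans (hf hs.some hs.some_mem)
  rcases measureReal_nonneg.eq_or_lt with hzero | hpos
  · rwa [← measureReal_def, ← hzero, inv_zero, zero_mul]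
  have hfin : μ s < ⊤ := (ENNReal.toReal_pos_iff.mp hpos).2
  rw [← measureReal_def, inv_mul_le_iff₀ hpos, mul_comm]
  exact (le_abs_self _).trans (norm_setIntegral_le_of_norm_le_const hfin hf)

theorem norm_le_of_decay_of_norm_mem_Icc {E F : Type*} [SeminormedAddCommGroup E]
    [SeminormedAddCommGroup F] {g : E → F} {C L N : ℝ} (hC : 0 ≤ C) (hL : 0 ≤ L) (hN : 0 ≤ N)
    (hg : ∀ ξ, ‖g ξ‖ ≤ C * min 1 (‖ξ‖ ^ L) * (1 + ‖ξ‖) ^ (-N))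
    {s t : ℝ} {w : E} (hs : 0 ≤ s) (hw : ‖w‖ ∈ Set.Icc s t) :
    ‖g w‖ ≤ C * min 1 (t ^ L) / (1 + s) ^ N := by
  obtain ⟨hsw, hwt⟩ := hw
  have hs1 : 0 < 1 + s := by linarith
  calc ‖g w‖ ≤ C * min 1 (‖w‖ ^ L) * (1 + ‖w‖) ^ (-N) := hg w
    _ ≤ C * min 1 (t ^ L) * (1 + s) ^ (-N) := by
      gcongr ?_ * ?_
      · exact mul_nonneg hC (le_min zero_le_one (Real.rpow_nonneg ((norm_nonneg w).trans hwt) L))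
      · gcongr
      · exact Real.rpow_le_rpow_of_nonpos hs1 (by linarith) (neg_nonpos.mpr hN)
    _ = C * min 1 (t ^ L) / (1 + s) ^ N := by
      rw [Real.rpow_neg hs1.le, div_eq_mul_inv]

section

variable {d : ℕ} {A : Matrix (Fin d) (Fin d) ℝ}

theorem IsExpansive.isUnit_det (hA : IsExpansive A) : IsUnit A.det := by
  have hzero : (0 : ℂ) ∉ spectrum ℂ (A.map Complex.ofReal) := fun h ↦
    absurd (hA 0 h) (by simp)
  have hdet : (A.map Complex.ofReal).det = A.det := (RingHom.map_det Complex.ofRealHom A).symm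
  rw [spectrum.zero_mem_iff, not_not, Matrix.isUnit_iff_isUnit_det, hdet,
    isUnit_iff_ne_zero] at hzero
  exact isUnit_iff_ne_zero.mpr (by exact_mod_cast hzero)

theorem toEuclideanLin_zpow_neg_apply_zpow (hA : IsUnit A.det) (m n : ℤ)
    (ξ : EuclideanSpace ℝ (Fin d)) :
    Matrix.toEuclideanLin (A ^ (-m)) (Matrix.toEuclideanLin (A ^ n) ξ) =
      Matrix.toEuclideanLin (A ^ (n - m)) ξ := by
  rw [← LinearMap.comp_apply, ← Matrix.toLpLin_mul_same, ← Matrix.zpow_add hA, neg_add_eq_sub]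

namespace ExpBound

variable {lm lp b : ℝ}

theorem mul_pow_nonneg (h : ExpBound A lm lp b) {ξ : EuclideanSpace ℝ (Fin d)} (hξ : ξ ≠ 0)
    (j : ℕ) : 0 ≤ b * lp ^ j :=
  nonneg_of_mul_nonneg_left ((norm_nonneg _).trans (h ξ j).2.1) (norm_pos_iff.mpr hξ)

theorem opNorm_zpow_le (h : ExpBound A lm lp b) {j : ℕ} (hj : 0 ≤ b * lp ^ j) :
    opNorm (A ^ (j : ℤ)) ≤ b * lp ^ j :=
  ContinuousLinearMap.opNorm_le_bound _ hj fun ξ ↦ (h ξ j).2.1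

theorem norm_zpow_apply_mem_Icc (h : ExpBound A lm lp b) (hb : 0 < b) (hlm : 0 ≤ lm)
    {r R : ℝ} (hr : 0 < r) {η : EuclideanSpace ℝ (Fin d)} (hη : ‖η‖ ∈ Set.Icc r R) (j : ℕ) :
    ‖Matrix.toEuclideanLin (A ^ (j : ℤ)) η‖ ∈ Set.Icc (lm ^ j * r / b) (b * lp ^ j * R) := by
  have hη0 : η ≠ 0 := norm_pos_iff.mp (hr.trans_le hη.1)
  obtain ⟨hlow, hup, -⟩ := h η j
  constructor
  · calc lm ^ j * r / b = 1 / b * lm ^ j * r := by ring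
      _ ≤ 1 / b * lm ^ j * ‖η‖ := by gcongr; exact hη.1
      _ ≤ _ := hlow
  · exact hup.trans (mul_le_mul_of_nonneg_left hη.2 (h.mul_pow_nonneg hη0 j))

end ExpBound

end

theorem homogeneous_Mmn_pointwise_nonneg_general
    (d : ℕ) (A : Matrix (Fin d) (Fin d) ℝ) (hA : IsExpansive A)
    (lm lp : ℝ) (hspec : SpecBound A lm lp)
    (b : ℝ) (hb : 0 < b) (hexp : ExpBound A lm lp b)
    (Q₀ : Set (EuclideanSpace ℝ (Fin d))) (hQne : Q₀.Nonempty)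
    (r R : ℝ) (hr : 0 < r) (hrR : ∀ ξ ∈ Q₀, r ≤ ‖ξ‖ ∧ ‖ξ‖ ≤ R)
    (a τ σ C L N : ℝ) (ha : 0 < a) (hτ : 0 < τ) (hσ : 0 < σ) (hC : 0 < C)
    (hL : 0 < L) (hN : 0 < N)
    (g : EuclideanSpace ℝ (Fin d) → ℂ)
    (hg : ∀ ξ : EuclideanSpace ℝ (Fin d),
      ‖g ξ‖ ≤ C * min 1 (‖ξ‖ ^ L) * (1 + ‖ξ‖) ^ (-N))
    (M : ℤ → ℤ → ℝ)
    (hM : ∀ m n : ℤ, M m n =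
      a ^ (τ * ((m : ℝ) - (n : ℝ))) * (1 + opNorm (A ^ (n - m))) ^ σ *
        ((volume (matImage (A ^ n) Q₀)).toReal⁻¹ *
          ∫ ξ in matImage (A ^ n) Q₀,
            ‖g (Matrix.toEuclideanLin (A ^ (-m)) ξ)‖) ^ τ) :
    ∀ m n : ℤ, 0 ≤ n - m →
      M m n ≤ a ^ (τ * ((m : ℝ) - (n : ℝ))) * (1 + b * lp ^ (n - m)) ^ σ *
        (C * min 1 ((b * lp ^ (n - m) * R) ^ L) / (1 + lm ^ (n - m) * r / b) ^ N) ^ τ := by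
  intro m n hnm
  obtain ⟨ξ₀, hξ₀⟩ := hQne
  have hξ₀ne : ξ₀ ≠ 0 := norm_pos_iff.mp (hr.trans_le (hrR ξ₀ hξ₀).1)
  have hlm : 0 ≤ lm := zero_le_one.trans hspec.1.le
  rw [hM]
  lift n - m to ℕ using hnm with k hk
  have hbound : ∀ ξ ∈ matImage (A ^ n) Q₀, ‖‖g (Matrix.toEuclideanLin (A ^ (-m)) ξ)‖‖ ≤
      C * min 1 ((b * lp ^ k * R) ^ L) / (1 + lm ^ k * r / b) ^ N := by
    rintro _ ⟨η, hη, rfl⟩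
    rw [norm_norm, toEuclideanLin_zpow_neg_apply_zpow hA.isUnit_det, ← hk]
    exact norm_le_of_decay_of_norm_mem_Icc hC.le hL.le hN.le hg (by positivity)
      (hexp.norm_zpow_apply_mem_Icc hb hlm hr (hrR η hη) k)
  have hbk : 0 ≤ b * lp ^ k := hexp.mul_pow_nonneg hξ₀ne k
  rw [zpow_natCast lp, zpow_natCast lm]
  gcongr
  · exact add_nonneg zero_le_one (norm_nonneg _)
  · exact hexp.opNorm_zpow_le hbk
  · exact inv_toReal_mul_setIntegral_le_of_norm_le ⟨_, Set.mem_image_of_mem _ hξ₀⟩ hbound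

/-- Pointwise estimate of `M_{mn}` for n − m ≥ 0. -/
theorem homogeneous_Mmn_pointwise_nonneg
    (d : ℕ) (hd : 1 ≤ d) (A : Matrix (Fin d) (Fin d) ℝ) (hA : IsExpansive A)
    (lm lp : ℝ) (hspec : SpecBound A lm lp)
    (b : ℝ) (hb : 0 < b) (hexp : ExpBound A lm lp b)
    (Q₀ : Set (EuclideanSpace ℝ (Fin d))) (hQne : Q₀.Nonempty) (hQopen : IsOpen Q₀)
    (hQbdd : Bornology.IsBounded Q₀) (hQ0 : (0 : EuclideanSpace ℝ (Fin d)) ∉ Q₀)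
    (r R : ℝ) (hr : 0 < r) (hrR : ∀ ξ ∈ Q₀, r ≤ ‖ξ‖ ∧ ‖ξ‖ ≤ R)
    (a τ σ C L N : ℝ) (ha : 0 < a) (hτ : 0 < τ) (hσ : 0 < σ) (hC : 0 < C)
    (hL : 0 < L) (hN : 0 < N)
    (g : EuclideanSpace ℝ (Fin d) → ℂ) (hgm : Measurable g)
    (hg : ∀ ξ : EuclideanSpace ℝ (Fin d),
      ‖g ξ‖ ≤ C * min 1 (‖ξ‖ ^ L) * (1 + ‖ξ‖) ^ (-N))
    (M : ℤ → ℤ → ℝ)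
    (hM : ∀ m n : ℤ, M m n =
      a ^ (τ * ((m : ℝ) - (n : ℝ))) * (1 + opNorm (A ^ (n - m))) ^ σ *
        ((volume (matImage (A ^ n) Q₀)).toReal⁻¹ *
          ∫ ξ in matImage (A ^ n) Q₀,
            ‖g (Matrix.toEuclideanLin (A ^ (-m)) ξ)‖) ^ τ) :
    ∀ m n : ℤ, 0 ≤ n - m →
      M m n ≤ a ^ (τ * ((m : ℝ) - (n : ℝ))) * (1 + b * lp ^ (n - m)) ^ σ *
        (C * min 1 ((b * lp ^ (n - m) * R) ^ L) / (1 + lm ^ (n - m) * r / b) ^ N) ^ τ :=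
  homogeneous_Mmn_pointwise_nonneg_general d A hA lm lp hspec b hb hexp Q₀ hQne r R hr hrR a τ σ C L
    N ha hτ hσ hC hL hN g hg M hM
end
end

section
/- Let ε, p₀, q₀ ∈ (0,1], p ∈ [p₀, ∞], q ∈ [q₀, ∞], and set τ := min{1, p, q}, θ := max{1/p − 1, 0}, N := ⌈(d+ε)/min{1,p}⌉, and σ := τ·(d+1) if p ≥ 1 and σ := τ·(d/p + ⌈(d+ε)/p⌉) if p < 1. Let A be a d×d real expansive matrix, s ∈ ℤ, Q₀ an open bounded subset of ℝ^d with |ξ| < R₀ on Q₀ and positive Lebesgue measure, and Q₁ an open bounded subset of ℝ^d with 0 < r ≤ |ξ| ≤ R on Q₁; set T₀ := I_d, T_i := A^{i−1} for i ≥ 1, Q_i := A^{i−1}Q₁ for i ≥ 1, w₀ := 1 and w_i := |det A|^{s·(i−1)} for i ≥ 1. Let ρ₁, ρ₂ : ℝ^d → (0, ∞) satisfy ρ₁(ξ) ≤ C·(1+|ξ|)^{−K₂} and ρ₂(ξ) ≤ C·min{1, |ξ|^{L₂}}·(1+|ξ|)^{−N₂} for all ξ ∈ ℝ^d, where C > 0,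 K₂ > log_{λ₋}(λ₊^{σ/τ}/|det A|^{θ−s}), L₂ > (θ−s)·log_{λ₋}|det A| and N₂ > log_{λ₋}(λ₊^{σ/τ}/|det A|^{θ−s}). Define, for i, j ∈ ℕ₀, N²_{ij} := ( (w_i/w_j)·(|det T_j|/|det T_i|)^θ )^τ · (1 + ‖T_j^{−1}T_i‖)^σ · ( |det T_i|^{−1} ∫_{Q_i} ρ_{n_j}(T_j^{−1} ξ) dξ )^τ, where n₀ := 1 and n_j := 2 for j ≥ 1. Then sup_{i∈ℕ₀} Σ_{j∈ℕ₀} N²_{ij} < ∞ and sup_{j∈ℕ₀} Σ_{i∈ℕ₀} N²_{ij} < ∞. -/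
open MeasureTheory

noncomputable section

open scoped ENNReal

/-!
Write `k = i - 1` and `l = j - 1`, so that `T_i = A^k`, `T_j = A^l` and the weight factor of
`N²_{ij}` is exactly `u^(k - l)` with `u = (|det A|^(s - θ))^τ`. Gelfand's formula gives
`‖A^n‖ ≲ λ₊^n` and `‖A^{-n}‖ ≲ λ₋^{-n}`. For `k > l` the integrand is evaluated on
`A^(k-l) Q₁`, where `|ξ| ≳ λ₋^(k-l)`, so it decays like `λ₋^{-E(k-l)}` with `E = min K₂ N₂`;
the hypotheses on `K₂` and `N₂` say precisely that `u · λ₊^σ · λ₋^{-Eτ} < 1`.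
For `k ≤ l` the other two factors stay bounded and the weight `u^(k-l)` decays by itself:
the bound on `ρ₂` at `ξ = 0` and `ρ₂(0) > 0` force `L₂ ≤ 0`, and then the hypothesis on `L₂`
gives `u > 1`. Hence `N²_{ij} ≲ q^{|i-j|}` for some `q < 1`, and both iterated sums are
dominated by a two-sided geometric series.
-/

open Filter Asymptotics in
theorem exists_norm_pow_le_mul_pow {B : Type*} [NormedRing B] [NormedAlgebra ℂ B]
    [CompleteSpace B] [Nontrivial B] {a : B} {t : ℝ} (h : ∀ μ ∈ spectrum ℂ a, ‖μ‖ < t) :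
    ∃ c > 0, ∀ n : ℕ, ‖a ^ n‖ ≤ c * t ^ n := by
  obtain ⟨μ, hμ⟩ := spectrum.nonempty a
  lift t to NNReal using (norm_nonneg μ).trans (h μ hμ).le
  have hbig : (fun n : ℕ => a ^ n) =O[atTop] fun n => (t : ℝ) ^ n := by
    refine IsBigO.of_bound 1 ?_
    have hrad : spectralRadius ℂ a < t :=
      spectrum.spectralRadius_lt_of_forall_lt a fun μ hμ => by exact_mod_cast h μ hμ
    filter_upwards [(spectrum.pow_nnnorm_pow_one_div_tendsto_nhds_spectralRadius
      a).eventually_lt_const hrad, eventually_gt_atTop 0] with n hn hn0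
    rw [one_div, ENNReal.rpow_inv_lt_iff (by positivity)] at hn
    have : ‖a ^ n‖₊ ≤ t ^ n := by exact_mod_cast hn.le
    simpa using NNReal.coe_le_coe.2 this
  have ht : (t : ℝ) ≠ 0 := ((norm_nonneg μ).trans_lt (h μ hμ)).ne'
  obtain ⟨c, hc, hbound⟩ := bound_of_isBigO_nat_atTop hbig
  exact ⟨c, hc, fun n => by simpa using hbound (pow_ne_zero n ht)⟩

theorem Matrix.map_inv_of_field {n K L : Type*} [Fintype n] [DecidableEq n] [Field K] [Field L]
    (f : K →+* L) (M : Matrix n n K) : M⁻¹.map f = (M.map f)⁻¹ := by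
  rw [Matrix.inv_def, Matrix.inv_def, ← RingHom.mapMatrix_apply, ← RingHom.mapMatrix_apply,
    ← f.map_det, ← f.map_adjugate, Ring.inverse_eq_inv', Ring.inverse_eq_inv', ← map_inv₀]
  ext i j
  simp

section Euclidean

open Matrix
open scoped Matrix.Norms.L2Operator

variable {d : ℕ}

theorem opNorm_nonneg (M : Matrix (Fin d) (Fin d) ℝ) : 0 ≤ opNorm M :=
  norm_nonneg _

theorem norm_toEuclideanLin_le (M : Matrix (Fin d) (Fin d) ℝ) (x : EuclideanSpace ℝ (Fin d)) :
    ‖toEuclideanLin M x‖ ≤ opNorm M * ‖x‖ :=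
  (toEuclideanCLM (𝕜 := ℝ) M).le_opNorm x

theorem norm_le_opNorm_inv_mul_norm {M : Matrix (Fin d) (Fin d) ℝ} (hM : IsUnit M.det)
    (x : EuclideanSpace ℝ (Fin d)) : ‖x‖ ≤ opNorm M⁻¹ * ‖toEuclideanLin M x‖ := by
  have hx : toEuclideanLin M⁻¹ (toEuclideanLin M x) = x := by
    rw [← LinearMap.comp_apply, ← toLpLin_mul_same, nonsing_inv_mul _ hM, toLpLin_one,
      LinearMap.id_apply]
  simpa only [hx] using norm_toEuclideanLin_le M⁻¹ (toEuclideanLin M x)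

theorem opNorm_le_norm_map_ofReal (M : Matrix (Fin d) (Fin d) ℝ) :
    opNorm M ≤ ‖M.map Complex.ofReal‖ := by
  refine ContinuousLinearMap.opNorm_le_bound _ (norm_nonneg _) fun x => ?_
  have key := l2_opNorm_mulVec (M.map Complex.ofReal) (WithLp.toLp 2 (fun i => (x i : ℂ)))
  have hmul : M.map Complex.ofReal *ᵥ (fun i => (x i : ℂ)) = fun i => ((M *ᵥ x.ofLp) i : ℂ) := by
    ext i
    simp [Matrix.mulVec, dotProduct]
  simp only [EuclideanSpace.norm_eq] at key ⊢
  simpa [hmul] using key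

theorem exists_opNorm_pow_le_mul_pow [Nonempty (Fin d)] {M : Matrix (Fin d) (Fin d) ℝ} {t : ℝ}
    (h : ∀ μ ∈ spectrum ℂ (M.map Complex.ofReal), ‖μ‖ < t) :
    ∃ c > 0, ∀ n : ℕ, opNorm (M ^ n) ≤ c * t ^ n := by
  obtain ⟨c, hc, hbound⟩ := exists_norm_pow_le_mul_pow h
  refine ⟨c, hc, fun n => (opNorm_le_norm_map_ofReal _).trans ?_⟩
  rw [show (M ^ n).map Complex.ofReal = M.map Complex.ofReal ^ n from
    map_pow Complex.ofRealHom.mapMatrix M n]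
  exact hbound n

theorem inv_pow_mul_pow_of_le {A : Matrix (Fin d) (Fin d) ℝ} (hA : IsUnit A.det) {k l : ℕ}
    (h : l ≤ k) : (A ^ l)⁻¹ * A ^ k = A ^ (k - l) := by
  rw [pow_sub' A hA h, ← inv_pow', pow_inv_comm']

theorem inv_pow_mul_pow_of_ge {A : Matrix (Fin d) (Fin d) ℝ} (hA : IsUnit A.det) {k l : ℕ}
    (h : k ≤ l) : (A ^ l)⁻¹ * A ^ k = (A ^ (l - k))⁻¹ := by
  rw [← inv_pow', ← inv_pow', pow_sub' A⁻¹ (isUnit_nonsing_inv_det A hA) h, ← inv_pow' A⁻¹,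
    nonsing_inv_nonsing_inv A hA]

theorem matImage_one (S : Set (EuclideanSpace ℝ (Fin d))) : matImage 1 S = S := by
  simp [matImage]

theorem volume_matImage (M : Matrix (Fin d) (Fin d) ℝ) (S : Set (EuclideanSpace ℝ (Fin d))) :
    volume (matImage M S) = ENNReal.ofReal |M.det| * volume S := by
  rw [matImage, Measure.addHaar_image_linearMap, toEuclideanLin, toLpLin_eq_toLin,
    LinearMap.det_toLin]

theorem abs_det_inv_mul_setIntegral_matImage_le {M : Matrix (Fin d) (Fin d) ℝ}
    (hM : IsUnit M.det) {S : Set (EuclideanSpace ℝ (Fin d))} (hS : volume S < ⊤)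
    {f : EuclideanSpace ℝ (Fin d) → ℝ} {c : ℝ} (hf : ∀ η ∈ S, ‖f (toEuclideanLin M η)‖ ≤ c) :
    |M.det|⁻¹ * ∫ ξ in matImage M S, f ξ ≤ volume.real S * c := by
  have hvol : volume.real (matImage M S) = |M.det| * volume.real S := by
    simp [measureReal_def, volume_matImage]
  have hbound := norm_setIntegral_le_of_norm_le_const (μ := volume) (f := f) (s := matImage M S)
    (C := c) (by rw [volume_matImage]; exact ENNReal.mul_lt_top ENNReal.ofReal_lt_top hS)
    (by rintro _ ⟨η, hη, rfl⟩; exact hf η hη)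
  rw [inv_mul_le_iff₀ (abs_pos.2 hM.ne_zero)]
  calc ∫ ξ in matImage M S, f ξ ≤ c * volume.real (matImage M S) := (le_abs_self _).trans hbound
    _ = |M.det| * (volume.real S * c) := by rw [hvol]; ring

end Euclidean

namespace SpecBound

open Matrix
open scoped Matrix.Norms.L2Operator

variable {d : ℕ} {A : Matrix (Fin d) (Fin d) ℝ} {lm lp : ℝ}

theorem one_lt_lp [Nonempty (Fin d)] (h : SpecBound A lm lp) : 1 < lp := by
  obtain ⟨μ, hμ⟩ := spectrum.nonempty (A.map Complex.ofReal)
  linarith [h.1, h.2 μ hμ]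

theorem isUnit_map_ofReal (h : SpecBound A lm lp) : IsUnit (A.map Complex.ofReal) :=
  spectrum.isUnit_of_zero_notMem ℂ fun h0 => by
    linarith [h.1, norm_zero (E := ℂ) ▸ (h.2 0 h0).1]

theorem isUnit_det (h : SpecBound A lm lp) : IsUnit A.det := by
  have := (isUnit_iff_isUnit_det _).1 h.isUnit_map_ofReal
  rw [show A.map Complex.ofReal = Complex.ofRealHom.mapMatrix A from rfl,
    ← Complex.ofRealHom.map_det] at this
  simpa using this

theorem norm_lt_inv_of_mem_spectrum_inv (h : SpecBound A lm lp) :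
    ∀ μ ∈ spectrum ℂ (A⁻¹.map Complex.ofReal), ‖μ‖ < lm⁻¹ := by
  intro μ hμ
  obtain ⟨U, hU⟩ := h.isUnit_map_ofReal
  rw [show A⁻¹.map Complex.ofReal = ↑U⁻¹ by
    rw [coe_units_inv, hU]; exact map_inv_of_field Complex.ofRealHom A,
    ← spectrum.map_inv, hU, Set.mem_inv] at hμ
  have hlm : lm < ‖μ‖⁻¹ := by simpa using (h.2 _ hμ).1
  have hμ0 : μ ≠ 0 := by rintro rfl; simp at hlm; linarith [h.1]
  exact (lt_inv_comm₀ (zero_lt_one.trans h.1) (norm_pos_iff.2 hμ0)).1 hlm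

theorem exists_opNorm_bounds [Nonempty (Fin d)] (h : SpecBound A lm lp) :
    ∃ b > 0, (∀ n : ℕ, opNorm (A ^ n) ≤ b * lp ^ n) ∧
      ∀ n : ℕ, opNorm (A ^ n)⁻¹ ≤ b * (lm ^ n)⁻¹ := by
  obtain ⟨c₁, hc₁, hgrow⟩ := exists_opNorm_pow_le_mul_pow fun μ hμ => (h.2 μ hμ).2
  obtain ⟨c₂, -, hshrink⟩ := exists_opNorm_pow_le_mul_pow h.norm_lt_inv_of_mem_spectrum_inv
  have hlp : 0 ≤ lp := zero_le_one.trans h.one_lt_lp.le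
  have hlm : 0 ≤ lm⁻¹ := inv_nonneg.2 (zero_le_one.trans h.1.le)
  refine ⟨max c₁ c₂, lt_max_of_lt_left hc₁, fun n => ?_, fun n => ?_⟩
  · exact (hgrow n).trans (mul_le_mul_of_nonneg_right (le_max_left _ _) (by positivity))
  · rw [← inv_pow', ← inv_pow]
    exact (hshrink n).trans (mul_le_mul_of_nonneg_right (le_max_right _ _) (by positivity))

end SpecBound

theorem toReal_min_one_min_pos {p q : ℝ≥0∞} (hp : 0 < p) (hq : 0 < q) :
    0 < (min 1 (min p q)).toReal :=
  ENNReal.toReal_pos (lt_min one_pos (lt_min hp hq)).ne'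
    (ne_top_of_le_ne_top ENNReal.one_ne_top (min_le_left _ _))

theorem one_lt_rpow_sub_of_mul_logb_neg {b a θ s : ℝ} (hb : 1 < b) (ha : 0 < a)
    (h : (θ - s) * Real.logb b a < 0) : 1 < a ^ (s - θ) := by
  rw [← Real.logb_rpow_eq_mul_logb_of_pos ha, Real.logb_neg_iff hb (by positivity)] at h
  rw [← neg_sub, Real.rpow_neg ha.le]
  exact one_lt_inv_iff₀.2 ⟨by positivity, h⟩

theorem rpow_sub_mul_lt_rpow_of_logb_div_lt {b a x θ s E : ℝ} (hb : 1 < b) (ha : 0 < a)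
    (hx : 0 < x) (h : Real.logb b (x / a ^ (θ - s)) < E) : a ^ (s - θ) * x < b ^ E := by
  have := (Real.logb_lt_iff_lt_rpow hb (by positivity)).1 h
  rwa [div_eq_mul_inv, ← Real.rpow_neg ha.le, neg_sub, mul_comm] at this

theorem pos_of_one_le_of_lt_rpow {b x E : ℝ} (hb : 1 < b) (hx : 1 ≤ x) (h : x < b ^ E) :
    0 < E := by
  by_contra! hE
  linarith [Real.rpow_le_one_of_one_le_of_nonpos hb.le hE]

theorem max_rpow_mul_lt_one {α x β σ τ : ℝ} (hα : 1 < α) (hx : 0 < x) (hβ : 0 < β) (hτ : 0 < τ)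
    (h : α * x ^ (σ / τ) < β) : max (α ^ τ * (x ^ σ * (β⁻¹) ^ τ)) (α ^ τ)⁻¹ < 1 := by
  refine max_lt ?_ (inv_lt_one_of_one_lt₀ (Real.one_lt_rpow hα hτ))
  have hα0 : 0 < α := zero_lt_one.trans hα
  have : (α * x ^ (σ / τ) * β⁻¹) ^ τ < 1 :=
    Real.rpow_lt_one (by positivity) (by rwa [← div_eq_mul_inv, div_lt_one hβ]) hτ
  rwa [Real.mul_rpow (by positivity) (by positivity), Real.mul_rpow hα0.le (by positivity),
    ← Real.rpow_mul hx.le, div_mul_cancel₀ σ hτ.ne', mul_assoc] at this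

theorem weight_ratio_rpow {a : ℝ} (ha : 0 < a) (s : ℤ) (θ τ : ℝ) (k l : ℕ) :
    ((a ^ (s * (k : ℤ)) / a ^ (s * (l : ℤ))) * (a ^ l / a ^ k) ^ θ) ^ τ
      = ((a ^ ((s : ℝ) - θ)) ^ τ) ^ ((k : ℤ) - l) := by
  simp only [← Real.rpow_intCast, ← Real.rpow_natCast, ← Real.rpow_sub ha, ← Real.rpow_mul ha.le,
    ← Real.rpow_add ha]
  congr 1
  push_cast
  ring

theorem zpow_sub_mul_pow_tsub_le {u v : ℝ} (hu : 0 < u) (hv : 0 ≤ v) (k l : ℕ) :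
    u ^ ((k : ℤ) - l) * v ^ (k - l) ≤ max (u * v) u⁻¹ ^ Int.natAbs ((k : ℤ) - l) := by
  rcases le_total l k with h | h
  · obtain ⟨n, rfl⟩ := Nat.exists_eq_add_of_le h
    simp only [Nat.cast_add, add_sub_cancel_left, zpow_natCast, Int.natAbs_natCast,
      Nat.add_sub_cancel_left, ← mul_pow]
    exact pow_le_pow_left₀ (by positivity) (le_max_left _ _) n
  · obtain ⟨n, rfl⟩ := Nat.exists_eq_add_of_le h
    simp only [Nat.cast_add, sub_add_cancel_left, zpow_neg, zpow_natCast, Int.natAbs_neg,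
      Int.natAbs_natCast, Nat.sub_eq_zero_of_le (Nat.le_add_right k n), pow_zero, mul_one,
      ← inv_pow]
    exact pow_le_pow_left₀ (by positivity) (le_max_right _ _) n

theorem pow_natAbs_pred_sub_pred_le {q : ℝ} (hq0 : 0 < q) (hq1 : q ≤ 1) (i j : ℕ) :
    q ^ Int.natAbs (((i - 1 : ℕ) : ℤ) - (j - 1 : ℕ)) ≤ q⁻¹ * q ^ Int.natAbs ((i : ℤ) - j) := by
  rw [le_inv_mul_iff₀ hq0, ← pow_succ']
  exact pow_le_pow_of_le_one hq0.le hq1 (by omega)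

theorem summable_pow_natAbs {q : ℝ} (hq0 : 0 ≤ q) (hq1 : q < 1) :
    Summable fun k : ℤ => q ^ k.natAbs :=
  Summable.of_nat_of_neg (by simpa using summable_geometric_of_lt_one hq0 hq1)
    (by simpa using summable_geometric_of_lt_one hq0 hq1)

theorem exists_forall_summable_tsum_le_of_le_pow_natAbs {f : ℕ → ℕ → ℝ} {M q : ℝ}
    (hq0 : 0 ≤ q) (hq1 : q < 1) (hf0 : ∀ i j, 0 ≤ f i j)
    (hf : ∀ i j, f i j ≤ M * q ^ Int.natAbs ((i : ℤ) - j)) :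
    ∃ S, ∀ i, Summable (f i) ∧ ∑' j, f i j ≤ S := by
  have hM : 0 ≤ M := by simpa using (hf0 0 0).trans (hf 0 0)
  have hg := summable_pow_natAbs hq0 hq1
  have hinj (i : ℕ) : Function.Injective fun j : ℕ => (i : ℤ) - j := fun j j' h => by
    simpa using h
  refine ⟨M * ∑' k : ℤ, q ^ k.natAbs, fun i => ?_⟩
  have hgi : Summable fun j : ℕ => M * q ^ Int.natAbs ((i : ℤ) - j) :=
    (hg.comp_injective (hinj i)).mul_left M
  have hfi : Summable (f i) := hgi.of_nonneg_of_le (hf0 i) (hf i)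
  refine ⟨hfi, ?_⟩
  calc ∑' j, f i j ≤ ∑' j : ℕ, M * q ^ Int.natAbs ((i : ℤ) - j) := hfi.tsum_le_tsum (hf i) hgi
    _ = M * ∑' j : ℕ, q ^ Int.natAbs ((i : ℤ) - j) := tsum_mul_left
    _ ≤ M * ∑' k : ℤ, q ^ k.natAbs := by
        gcongr
        exact tsum_comp_le_tsum_of_inj hg (fun _ => by positivity) (hinj i)

theorem ite_le_mul_one_add_norm_rpow_neg_min {X : Type*} [SeminormedAddCommGroup X]
    {ρ₁ ρ₂ : X → ℝ} {C K N L : ℝ} (hC : 0 ≤ C) (hρ₁ : ∀ ξ, ρ₁ ξ ≤ C * (1 + ‖ξ‖) ^ (-K))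
    (hρ₂ : ∀ ξ, ρ₂ ξ ≤ C * min 1 (‖ξ‖ ^ L) * (1 + ‖ξ‖) ^ (-N)) (j : ℕ) (ξ : X) :
    (if j = 0 then ρ₁ else ρ₂) ξ ≤ C * (1 + ‖ξ‖) ^ (-min K N) := by
  have hdecay {K' : ℝ} (hK' : min K N ≤ K') :
      C * (1 + ‖ξ‖) ^ (-K') ≤ C * (1 + ‖ξ‖) ^ (-min K N) := by
    gcongr
    simp
  split_ifs
  · exact (hρ₁ ξ).trans (hdecay (min_le_left _ _))
  · refine (hρ₂ ξ).trans (le_trans ?_ (hdecay (min_le_right _ _)))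
    exact mul_le_mul_of_nonneg_right (mul_le_of_le_one_right hC (min_le_left _ _))
      (by positivity)

section Decay

open Matrix

variable {d : ℕ} {A : Matrix (Fin d) (Fin d) ℝ} {lm lp b : ℝ}

theorem one_add_opNorm_inv_pow_mul_pow_le (hA : IsUnit A.det) (hlm : 1 ≤ lm) (hlp : 1 ≤ lp)
    (hb : 0 ≤ b) (hgrow : ∀ n, opNorm (A ^ n) ≤ b * lp ^ n)
    (hshrink : ∀ n, opNorm (A ^ n)⁻¹ ≤ b * (lm ^ n)⁻¹) (k l : ℕ) :
    1 + opNorm ((A ^ l)⁻¹ * A ^ k) ≤ (1 + b) * lp ^ (k - l) := by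
  rcases le_total l k with h | h
  · rw [inv_pow_mul_pow_of_le hA h]
    nlinarith [hgrow (k - l), one_le_pow₀ hlp (n := k - l)]
  · rw [inv_pow_mul_pow_of_ge hA h, Nat.sub_eq_zero_of_le h, pow_zero, mul_one]
    nlinarith [hshrink (l - k), inv_le_one_of_one_le₀ (one_le_pow₀ hlm (n := l - k))]

theorem pow_mul_norm_le_mul_norm_pow_apply (hA : IsUnit A.det) (hlm : 0 < lm)
    (hshrink : ∀ n, opNorm (A ^ n)⁻¹ ≤ b * (lm ^ n)⁻¹) (n : ℕ) (η : EuclideanSpace ℝ (Fin d)) :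
    lm ^ n * ‖η‖ ≤ b * ‖toEuclideanLin (A ^ n) η‖ := by
  have hAn : IsUnit (A ^ n).det := by simpa [det_pow] using hA.pow n
  calc lm ^ n * ‖η‖ ≤ lm ^ n * (b * (lm ^ n)⁻¹ * ‖toEuclideanLin (A ^ n) η‖) := by
        grw [norm_le_opNorm_inv_mul_norm hAn η, hshrink n]
    _ = b * ‖toEuclideanLin (A ^ n) η‖ := by field_simp

variable {r C E : ℝ} {ρ : EuclideanSpace ℝ (Fin d) → ℝ}

theorem apply_pow_le_of_le_norm (hA : IsUnit A.det) (hlm : 0 < lm) (hb : 0 < b)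
    (hshrink : ∀ n, opNorm (A ^ n)⁻¹ ≤ b * (lm ^ n)⁻¹) (hr : 0 < r) (hC : 0 ≤ C) (hE : 0 ≤ E)
    (hρ : ∀ ξ, ρ ξ ≤ C * (1 + ‖ξ‖) ^ (-E)) {η : EuclideanSpace ℝ (Fin d)} (hη : r ≤ ‖η‖)
    (n : ℕ) : ρ (toEuclideanLin (A ^ n) η) ≤ C * (r / b) ^ (-E) * ((lm ^ E)⁻¹) ^ n := by
  have hc : 0 < r / b * lm ^ n := by positivity
  have hle : r / b * lm ^ n ≤ 1 + ‖toEuclideanLin (A ^ n) η‖ := by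
    rw [div_mul_eq_mul_div, div_le_iff₀ hb]
    nlinarith [pow_mul_norm_le_mul_norm_pow_apply hA hlm hshrink n η, pow_pos hlm n]
  calc ρ (toEuclideanLin (A ^ n) η) ≤ C * (r / b * lm ^ n) ^ (-E) := by
        grw [hρ, Real.rpow_le_rpow_of_nonpos hc hle (neg_nonpos.2 hE)]
    _ = C * (r / b) ^ (-E) * ((lm ^ E)⁻¹) ^ n := by
        rw [Real.mul_rpow (by positivity) (by positivity), ← Real.rpow_pow_comm hlm.le,
          Real.rpow_neg hlm.le, mul_assoc]

theorem norm_apply_inv_pow_mul_pow_le (hA : IsUnit A.det) (hlm : 0 < lm) (hb : 0 < b)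
    (hshrink : ∀ n, opNorm (A ^ n)⁻¹ ≤ b * (lm ^ n)⁻¹) (hr : 0 < r) (hC : 0 ≤ C) (hE : 0 ≤ E)
    (hρ0 : ∀ ξ, 0 ≤ ρ ξ) (hρ : ∀ ξ, ρ ξ ≤ C * (1 + ‖ξ‖) ^ (-E)) {k l : ℕ}
    {η : EuclideanSpace ℝ (Fin d)} (hη : l < k → r ≤ ‖η‖) :
    ‖ρ (toEuclideanLin ((A ^ l)⁻¹ * A ^ k) η)‖ ≤
      C * max 1 ((r / b) ^ (-E)) * ((lm ^ E)⁻¹) ^ (k - l) := by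
  rw [Real.norm_of_nonneg (hρ0 _)]
  rcases le_or_gt k l with h | h
  · rw [Nat.sub_eq_zero_of_le h, pow_zero, mul_one]
    calc _ ≤ C * (1 + ‖toEuclideanLin ((A ^ l)⁻¹ * A ^ k) η‖) ^ (-E) := hρ _
      _ ≤ C * 1 := by
          gcongr
          exact Real.rpow_le_one_of_one_le_of_nonpos (by simp) (neg_nonpos.2 hE)
      _ ≤ C * max 1 ((r / b) ^ (-E)) := by gcongr; exact le_max_left _ _
  · rw [inv_pow_mul_pow_of_le hA h.le]
    refine (apply_pow_le_of_le_norm hA hlm hb hshrink hr hC hE hρ (hη h) _).trans ?_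
    gcongr
    exact le_max_right _ _

end Decay

section SchurEntry

open Matrix

variable {d : ℕ}

/-- `N²_{ij}` of the paper for `T_i = A^k`, `T_j = A^l`, `w_i = |det A|^{sk}`, `w_j = |det A|^{sl}`,
`Q_i = A^k S` and `ρ_{n_j} = ρ`. -/
def schurEntry (A : Matrix (Fin d) (Fin d) ℝ) (s : ℤ) (θ τ σ : ℝ)
    (S : Set (EuclideanSpace ℝ (Fin d))) (ρ : EuclideanSpace ℝ (Fin d) → ℝ) (k l : ℕ) : ℝ :=
  ((|A.det| ^ (s * (k : ℤ)) / |A.det| ^ (s * (l : ℤ))) * (|(A ^ l).det| / |(A ^ k).det|) ^ θ) ^ τ *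
    (1 + opNorm ((A ^ l)⁻¹ * A ^ k)) ^ σ *
    (|(A ^ k).det|⁻¹ * ∫ ξ in matImage (A ^ k) S, ρ (toEuclideanLin (A ^ l)⁻¹ ξ)) ^ τ

variable {A : Matrix (Fin d) (Fin d) ℝ} {s : ℤ} {θ τ σ : ℝ} {S : Set (EuclideanSpace ℝ (Fin d))}
  {ρ : EuclideanSpace ℝ (Fin d) → ℝ}

theorem schurEntry_nonneg (hρ0 : ∀ ξ, 0 ≤ ρ ξ) (k l : ℕ) : 0 ≤ schurEntry A s θ τ σ S ρ k l := by
  have hnorm := opNorm_nonneg ((A ^ l)⁻¹ * A ^ k)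
  have hint : 0 ≤ ∫ ξ in matImage (A ^ k) S, ρ (toEuclideanLin (A ^ l)⁻¹ ξ) :=
    integral_nonneg fun _ => hρ0 _
  unfold schurEntry
  positivity

theorem schurEntry_le {lm lp b r C E V : ℝ} (hA : IsUnit A.det) (hlm : 1 ≤ lm) (hlp : 1 ≤ lp)
    (hb : 0 < b) (hgrow : ∀ n, opNorm (A ^ n) ≤ b * lp ^ n)
    (hshrink : ∀ n, opNorm (A ^ n)⁻¹ ≤ b * (lm ^ n)⁻¹) (hτ : 0 < τ) (hσ : 0 ≤ σ) (hr : 0 < r)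
    (hC : 0 ≤ C) (hE : 0 ≤ E) (hρ0 : ∀ ξ, 0 ≤ ρ ξ) (hρ : ∀ ξ, ρ ξ ≤ C * (1 + ‖ξ‖) ^ (-E))
    (hS : volume S < ⊤) (hSV : volume.real S ≤ V) {k l : ℕ} (hη : ∀ η ∈ S, l < k → r ≤ ‖η‖) :
    schurEntry A s θ τ σ S ρ k l ≤
      (1 + b) ^ σ * (V * (C * max 1 ((r / b) ^ (-E)))) ^ τ *
        max ((|A.det| ^ ((s : ℝ) - θ)) ^ τ * (lp ^ σ * ((lm ^ E)⁻¹) ^ τ))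
          ((|A.det| ^ ((s : ℝ) - θ)) ^ τ)⁻¹ ^ Int.natAbs ((k : ℤ) - l) := by
  set κ := C * max 1 ((r / b) ^ (-E))
  set u := (|A.det| ^ ((s : ℝ) - θ)) ^ τ
  set I := |(A ^ k).det|⁻¹ * ∫ ξ in matImage (A ^ k) S, ρ (toEuclideanLin (A ^ l)⁻¹ ξ)
  have hκ : 0 ≤ κ := mul_nonneg hC (le_max_of_le_left zero_le_one)
  have hV : 0 ≤ V := measureReal_nonneg.trans hSV
  have hβ : 0 ≤ (lm ^ E)⁻¹ := by positivity
  have hdet : 0 < |A.det| := abs_pos.2 hA.ne_zero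
  have hweight : ((|A.det| ^ (s * (k : ℤ)) / |A.det| ^ (s * (l : ℤ))) *
      (|(A ^ l).det| / |(A ^ k).det|) ^ θ) ^ τ = u ^ ((k : ℤ) - l) := by
    rw [det_pow, det_pow, abs_pow, abs_pow]
    exact weight_ratio_rpow hdet s θ τ k l
  have hnorm : (1 + opNorm ((A ^ l)⁻¹ * A ^ k)) ^ σ ≤ (1 + b) ^ σ * (lp ^ σ) ^ (k - l) := by
    rw [Real.rpow_pow_comm (by linarith), ← Real.mul_rpow (by positivity) (by positivity)]
    exact Real.rpow_le_rpow (by linarith [opNorm_nonneg ((A ^ l)⁻¹ * A ^ k)])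
      (one_add_opNorm_inv_pow_mul_pow_le hA hlm hlp hb.le hgrow hshrink k l) hσ
  have hI0 : 0 ≤ I := mul_nonneg (by positivity) (integral_nonneg fun _ => hρ0 _)
  have hI : I ^ τ ≤ (V * κ) ^ τ * ((((lm ^ E)⁻¹) ^ τ) ^ (k - l)) := by
    have hAk : IsUnit (A ^ k).det := by simpa [det_pow] using hA.pow k
    have hbound := abs_det_inv_mul_setIntegral_matImage_le hAk hS
      (f := fun ξ => ρ (toEuclideanLin (A ^ l)⁻¹ ξ)) fun η hη' => by
        simpa only [LinearMap.comp_apply, toLpLin_mul_same] using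
          norm_apply_inv_pow_mul_pow_le hA (by linarith) hb hshrink hr hC hE hρ0 hρ (hη η hη')
    calc I ^ τ ≤ (V * (κ * ((lm ^ E)⁻¹) ^ (k - l))) ^ τ :=
          Real.rpow_le_rpow hI0 (hbound.trans (by gcongr)) hτ.le
      _ = (V * κ) ^ τ * ((((lm ^ E)⁻¹) ^ τ) ^ (k - l)) := by
          rw [← mul_assoc, Real.mul_rpow (by positivity) (by positivity), Real.rpow_pow_comm hβ]
  have hIτ := Real.rpow_nonneg hI0 τ
  calc schurEntry A s θ τ σ S ρ k l
      = u ^ ((k : ℤ) - l) * (1 + opNorm ((A ^ l)⁻¹ * A ^ k)) ^ σ * I ^ τ := by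
        rw [schurEntry, hweight]
    _ ≤ u ^ ((k : ℤ) - l) * ((1 + b) ^ σ * (lp ^ σ) ^ (k - l)) *
          ((V * κ) ^ τ * ((((lm ^ E)⁻¹) ^ τ) ^ (k - l))) := by
        gcongr
    _ = (1 + b) ^ σ * (V * κ) ^ τ *
          (u ^ ((k : ℤ) - l) * (lp ^ σ * ((lm ^ E)⁻¹) ^ τ) ^ (k - l)) := by
        ring
    _ ≤ _ := mul_le_mul_of_nonneg_left
        (zpow_sub_mul_pow_tsub_le (by positivity) (by positivity) k l) (by positivity)

end SchurEntry

theorem inhomogeneous_atoms_condition_general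
    (d : ℕ) (hd : 1 ≤ d)
    (ε p₀ q₀ : ℝ) (hp₀ : p₀ ∈ Set.Ioc (0 : ℝ) 1)
    (hq₀ : q₀ ∈ Set.Ioc (0 : ℝ) 1)
    (p q : ℝ≥0∞) (hp : ENNReal.ofReal p₀ ≤ p) (hq : ENNReal.ofReal q₀ ≤ q)
    (τ θ : ℝ) (hτ : τ = (min 1 (min p q)).toReal)
    (σ : ℝ) (hσ : σ = if 1 ≤ p then τ * ((d : ℝ) + 1)
      else τ * ((d : ℝ) / p.toReal + (⌈((d : ℝ) + ε) / p.toReal⌉₊ : ℝ)))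
    (A : Matrix (Fin d) (Fin d) ℝ)
    (lm lp : ℝ) (hspec : SpecBound A lm lp)
    (s : ℤ)
    (Q₀ : Set (EuclideanSpace ℝ (Fin d)))
    (hQ₀bdd : Bornology.IsBounded Q₀)
    (Q₁ : Set (EuclideanSpace ℝ (Fin d)))
    (hQ₁bdd : Bornology.IsBounded Q₁)
    (r R : ℝ) (hr : 0 < r) (hrR : ∀ ξ ∈ Q₁, r ≤ ‖ξ‖ ∧ ‖ξ‖ ≤ R)
    (T : ℕ → Matrix (Fin d) (Fin d) ℝ) (hT0 : T 0 = 1)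
    (hTi : ∀ i : ℕ, 1 ≤ i → T i = A ^ ((i : ℤ) - 1))
    (Qs : ℕ → Set (EuclideanSpace ℝ (Fin d))) (hQs0 : Qs 0 = Q₀)
    (hQsi : ∀ i : ℕ, 1 ≤ i → Qs i = matImage (A ^ ((i : ℤ) - 1)) Q₁)
    (w : ℕ → ℝ) (hw0 : w 0 = 1)
    (hwi : ∀ i : ℕ, 1 ≤ i → w i = |A.det| ^ (s * ((i : ℤ) - 1)))
    (ρ₁ ρ₂ : EuclideanSpace ℝ (Fin d) → ℝ)
    (hρ₁pos : ∀ ξ, 0 < ρ₁ ξ) (hρ₂pos : ∀ ξ, 0 < ρ₂ ξ)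
    (C K₂ L₂ N₂ : ℝ) (hC : 0 < C)
    (hK₂ : Real.logb lm (lp ^ (σ / τ) / |A.det| ^ (θ - (s : ℝ))) < K₂)
    (hL₂ : (θ - (s : ℝ)) * Real.logb lm |A.det| < L₂)
    (hN₂ : Real.logb lm (lp ^ (σ / τ) / |A.det| ^ (θ - (s : ℝ))) < N₂)
    (hρ₁ : ∀ ξ : EuclideanSpace ℝ (Fin d), ρ₁ ξ ≤ C * (1 + ‖ξ‖) ^ (-K₂))
    (hρ₂ : ∀ ξ : EuclideanSpace ℝ (Fin d),
      ρ₂ ξ ≤ C * min 1 (‖ξ‖ ^ L₂) * (1 + ‖ξ‖) ^ (-N₂))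
    (N2 : ℕ → ℕ → ℝ)
    (hN2 : ∀ i j : ℕ, N2 i j =
      ((w i / w j) * (|(T j).det| / |(T i).det|) ^ θ) ^ τ *
        (1 + opNorm ((T j)⁻¹ * T i)) ^ σ *
        (|(T i).det|⁻¹ * ∫ ξ in Qs i,
          (if j = 0 then ρ₁ else ρ₂) (Matrix.toEuclideanLin (T j)⁻¹ ξ)) ^ τ) :
    (∃ S : ℝ, ∀ i : ℕ, Summable (fun j : ℕ => N2 i j) ∧ ∑' j : ℕ, N2 i j ≤ S) ∧
    (∃ S : ℝ, ∀ j : ℕ, Summable (fun i : ℕ => N2 i j) ∧ ∑' i : ℕ, N2 i j ≤ S) := by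
  have : Nonempty (Fin d) := ⟨⟨0, hd⟩⟩
  have hτ0 : 0 < τ := hτ ▸ toReal_min_one_min_pos ((ENNReal.ofReal_pos.2 hp₀.1).trans_le hp)
    ((ENNReal.ofReal_pos.2 hq₀.1).trans_le hq)
  have hσ0 : 0 ≤ σ := by rw [hσ, hτ]; split_ifs <;> positivity
  have hL₂0 : L₂ ≤ 0 := by
    by_contra! hL
    simpa [Real.zero_rpow hL.ne'] using (hρ₂pos 0).trans_le (hρ₂ 0)
  have hlm := hspec.1
  have hlp := hspec.one_lt_lp
  have hA := hspec.isUnit_det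
  have hdet : 0 < |A.det| := abs_pos.2 hA.ne_zero
  obtain ⟨b, hb, hgrow, hshrink⟩ := hspec.exists_opNorm_bounds
  set E := min K₂ N₂
  have hα := one_lt_rpow_sub_of_mul_logb_neg hlm hdet (hL₂.trans_le hL₂0)
  have hαβ := rpow_sub_mul_lt_rpow_of_logb_div_lt hlm hdet (by positivity) (lt_min hK₂ hN₂)
  have hE : 0 ≤ E := (pos_of_one_le_of_lt_rpow hlm
    (one_le_mul_of_one_le_of_one_le hα.le (Real.one_le_rpow hlp.le (by positivity))) hαβ).le
  set q := max ((|A.det| ^ ((s : ℝ) - θ)) ^ τ * (lp ^ σ * ((lm ^ E)⁻¹) ^ τ))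
    ((|A.det| ^ ((s : ℝ) - θ)) ^ τ)⁻¹
  have hq1 : q < 1 := max_rpow_mul_lt_one hα (by positivity) (by positivity) hτ0 hαβ
  have hq0 : 0 < q := lt_max_of_lt_right (by positivity)
  have hρ0 (j : ℕ) (ξ : EuclideanSpace ℝ (Fin d)) : 0 ≤ (if j = 0 then ρ₁ else ρ₂) ξ := by
    split_ifs <;> [exact (hρ₁pos ξ).le; exact (hρ₂pos ξ).le]
  have hρ := ite_le_mul_one_add_norm_rpow_neg_min hC.le hρ₁ hρ₂
  have hT (i : ℕ) : T i = A ^ (i - 1) := by cases i <;> simp [hT0, hTi]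
  have hw (i : ℕ) : w i = |A.det| ^ (s * ((i - 1 : ℕ) : ℤ)) := by cases i <;> simp [hw0, hwi]
  have hQs (i : ℕ) : Qs i = matImage (A ^ (i - 1)) (if i = 0 then Q₀ else Q₁) := by
    cases i <;> simp [hQs0, hQsi, matImage_one]
  have hentry (i j : ℕ) : N2 i j = schurEntry A s θ τ σ (if i = 0 then Q₀ else Q₁)
      (if j = 0 then ρ₁ else ρ₂) (i - 1) (j - 1) := by
    rw [hN2, hT, hT, hw, hw, hQs]
    rfl
  set V := max (volume.real Q₀) (volume.real Q₁)
  set M := (1 + b) ^ σ * (V * (C * max 1 ((r / b) ^ (-E)))) ^ τ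
  have hbound (i j : ℕ) : N2 i j ≤ M * q⁻¹ * q ^ Int.natAbs ((i : ℤ) - j) := by
    rw [hentry, mul_assoc]
    refine (schurEntry_le (V := V) hA hlm.le hlp.le hb hgrow hshrink hτ0 hσ0 hr hC.le hE
      (hρ0 j) (hρ j) ?_ ?_ ?_).trans ?_
    · split_ifs <;> [exact hQ₀bdd.measure_lt_top; exact hQ₁bdd.measure_lt_top]
    · split_ifs <;> [exact le_max_left _ _; exact le_max_right _ _]
    · intro η hη hlt
      split_ifs at hη <;> [exact absurd hlt (by omega); exact (hrR η hη).1]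
    · gcongr
      exact pow_natAbs_pred_sub_pred_le hq0 hq1.le i j
  have hnonneg (i j : ℕ) : 0 ≤ N2 i j := hentry i j ▸ schurEntry_nonneg (hρ0 j) _ _
  exact ⟨exists_forall_summable_tsum_le_of_le_pow_natAbs hq0.le hq1 hnonneg hbound,
    exists_forall_summable_tsum_le_of_le_pow_natAbs hq0.le hq1 (fun j i => hnonneg i j)
      fun j i => (hbound i j).trans_eq (by rw [← Int.natAbs_neg, neg_sub])⟩

/-- Condition (5b) of the atomic-decomposition theorem holds for the anisotropic inhomogeneous
Besov setting: both iterated sums of `N²_{ij}` are finite. -/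
theorem inhomogeneous_atoms_condition
    (d : ℕ) (hd : 1 ≤ d)
    (ε p₀ q₀ : ℝ) (hε : ε ∈ Set.Ioc (0 : ℝ) 1) (hp₀ : p₀ ∈ Set.Ioc (0 : ℝ) 1)
    (hq₀ : q₀ ∈ Set.Ioc (0 : ℝ) 1)
    (p q : ℝ≥0∞) (hp : ENNReal.ofReal p₀ ≤ p) (hq : ENNReal.ofReal q₀ ≤ q)
    (τ θ : ℝ) (hτ : τ = (min 1 (min p q)).toReal) (hθ : θ = max ((p⁻¹).toReal - 1) 0)
    (Nn : ℕ) (hNn : Nn = ⌈((d : ℝ) + ε) / (min 1 p).toReal⌉₊)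
    (σ : ℝ) (hσ : σ = if 1 ≤ p then τ * ((d : ℝ) + 1)
      else τ * ((d : ℝ) / p.toReal + (⌈((d : ℝ) + ε) / p.toReal⌉₊ : ℝ)))
    (A : Matrix (Fin d) (Fin d) ℝ) (hA : IsExpansive A)
    (lm lp : ℝ) (hspec : SpecBound A lm lp)
    (s : ℤ)
    (Q₀ : Set (EuclideanSpace ℝ (Fin d))) (hQ₀open : IsOpen Q₀)
    (hQ₀bdd : Bornology.IsBounded Q₀) (hQ₀vol : 0 < volume Q₀)
    (R₀ : ℝ) (hR₀ : ∀ ξ ∈ Q₀, ‖ξ‖ < R₀)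
    (Q₁ : Set (EuclideanSpace ℝ (Fin d))) (hQ₁open : IsOpen Q₁)
    (hQ₁bdd : Bornology.IsBounded Q₁)
    (r R : ℝ) (hr : 0 < r) (hrR : ∀ ξ ∈ Q₁, r ≤ ‖ξ‖ ∧ ‖ξ‖ ≤ R)
    (T : ℕ → Matrix (Fin d) (Fin d) ℝ) (hT0 : T 0 = 1)
    (hTi : ∀ i : ℕ, 1 ≤ i → T i = A ^ ((i : ℤ) - 1))
    (Qs : ℕ → Set (EuclideanSpace ℝ (Fin d))) (hQs0 : Qs 0 = Q₀)
    (hQsi : ∀ i : ℕ, 1 ≤ i → Qs i = matImage (A ^ ((i : ℤ) - 1)) Q₁)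
    (w : ℕ → ℝ) (hw0 : w 0 = 1)
    (hwi : ∀ i : ℕ, 1 ≤ i → w i = |A.det| ^ (s * ((i : ℤ) - 1)))
    (ρ₁ ρ₂ : EuclideanSpace ℝ (Fin d) → ℝ)
    (hρ₁pos : ∀ ξ, 0 < ρ₁ ξ) (hρ₂pos : ∀ ξ, 0 < ρ₂ ξ)
    (C K₂ L₂ N₂ : ℝ) (hC : 0 < C)
    (hK₂ : Real.logb lm (lp ^ (σ / τ) / |A.det| ^ (θ - (s : ℝ))) < K₂)
    (hL₂ : (θ - (s : ℝ)) * Real.logb lm |A.det| < L₂)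
    (hN₂ : Real.logb lm (lp ^ (σ / τ) / |A.det| ^ (θ - (s : ℝ))) < N₂)
    (hρ₁ : ∀ ξ : EuclideanSpace ℝ (Fin d), ρ₁ ξ ≤ C * (1 + ‖ξ‖) ^ (-K₂))
    (hρ₂ : ∀ ξ : EuclideanSpace ℝ (Fin d),
      ρ₂ ξ ≤ C * min 1 (‖ξ‖ ^ L₂) * (1 + ‖ξ‖) ^ (-N₂))
    (N2 : ℕ → ℕ → ℝ)
    (hN2 : ∀ i j : ℕ, N2 i j =
      ((w i / w j) * (|(T j).det| / |(T i).det|) ^ θ) ^ τ *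
        (1 + opNorm ((T j)⁻¹ * T i)) ^ σ *
        (|(T i).det|⁻¹ * ∫ ξ in Qs i,
          (if j = 0 then ρ₁ else ρ₂) (Matrix.toEuclideanLin (T j)⁻¹ ξ)) ^ τ) :
    (∃ S : ℝ, ∀ i : ℕ, Summable (fun j : ℕ => N2 i j) ∧ ∑' j : ℕ, N2 i j ≤ S) ∧
    (∃ S : ℝ, ∀ j : ℕ, Summable (fun i : ℕ => N2 i j) ∧ ∑' i : ℕ, N2 i j ≤ S) :=
  inhomogeneous_atoms_condition_general d hd ε p₀ q₀ hp₀ hq₀ p q hp hq τ θ hτ σ hσ A lm lp hspec s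
    Q₀ hQ₀bdd Q₁ hQ₁bdd r R hr hrR T hT0 hTi Qs hQs0 hQsi w hw0 hwi ρ₁ ρ₂ hρ₁pos hρ₂pos C K₂ L₂ N₂
    hC hK₂ hL₂ hN₂ hρ₁ hρ₂ N2 hN2
end
end
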